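/- Under the recursion z^(k) = P_{i_k} z^(k−1) + η̃_{i_k} ã_{i_k} with i.i.d. row choices P(i_k=i)=p_i, unit vectors ã_i spanning ℝⁿ, P = Σ_i p_i (I − ã_i ã_iᵀ), and λ := λ_max(P) < 1, for every k ≥ 0: E‖z^(k)‖² ≤ λ^k ‖z^(0)‖² + (Σ_i p_i η̃_i²)/(1 − λ). -/

import Mathlib

open Matrix

/-- One noisy Kaczmarz step on the error vector: `z ↦ P_i z + η̃_i ã_i`. -/
def kstep {n m : ℕ} (a : Fin m → EuclideanSpace ℝ (Fin n)) (η : Fin m → ℝ)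
    (i : Fin m) (z : EuclideanSpace ℝ (Fin n)) : EuclideanSpace ℝ (Fin n) :=
  WithLp.toLp 2 (((1 : Matrix (Fin n) (Fin n) ℝ) - vecMulVec (a i) (a i)).mulVec z
    + η i • (show Fin n → ℝ from a i) : Fin n → ℝ)

/-- The error vector after applying the steps indexed by `s : Fin k → Fin m`
in order, starting from `z0`. -/
def ktraj {n m : ℕ} (a : Fin m → EuclideanSpace ℝ (Fin n)) (η : Fin m → ℝ)
    (z0 : EuclideanSpace ℝ (Fin n)) {k : ℕ} (s : Fin k → Fin m) :
    EuclideanSpace ℝ (Fin n) :=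
  (List.ofFn s).foldl (fun z i => kstep a η i z) z0

/-- Expected squared error after `k` i.i.d. random steps, the expectation written
as a weighted sum over all row-index sequences of length `k`. -/
noncomputable def kMSE {n m : ℕ} (a : Fin m → EuclideanSpace ℝ (Fin n))
    (η : Fin m → ℝ) (p : Fin m → ℝ) (z0 : EuclideanSpace ℝ (Fin n)) (k : ℕ) : ℝ :=
  ∑ s : Fin k → Fin m, (∏ j, p (s j)) * ‖ktraj a η z0 s‖ ^ 2

/-!
Each step maps `z` to `Qᵢ z + η̃ᵢ ãᵢ`, where `Qᵢ z = z - ⟪ãᵢ, z⟫ ãᵢ` is the orthogonal projection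
onto `ãᵢ^⊥`. By Pythagoras `‖Qᵢ z + η̃ᵢ ãᵢ‖² = ‖Qᵢ z‖² + η̃ᵢ²`, and `⟪z, Qᵢ z⟫ = ‖Qᵢ z‖²`, so
averaging over `i` gives `zᵀ P z + Σ pᵢ η̃ᵢ²`. Since `P ≤ λ • 1` in the Loewner order, one step
yields `E‖z⁺‖² ≤ λ ‖z‖² + Σ pᵢ η̃ᵢ²`; splitting off the last index of a run turns this into
`E_{k+1} ≤ λ E_k + Σ pᵢ η̃ᵢ²`, which iterates to the bound because `0 ≤ λ` (`P` is positive
semidefinite).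
-/

open scoped InnerProductSpace

theorem le_pow_mul_add_div_of_le_mul_add {u : ℕ → ℝ} {r c : ℝ} (hr₀ : 0 ≤ r) (hr₁ : r < 1)
    (hc : 0 ≤ c) (hu : ∀ k, u (k + 1) ≤ r * u k + c) (k : ℕ) :
    u k ≤ r ^ k * u 0 + c / (1 - r) := by
  have hr : 0 < 1 - r := sub_pos.2 hr₁
  induction k with
  | zero => simpa using div_nonneg hc hr.le
  | succ k ih =>
    calc u (k + 1) ≤ r * u k + c := hu k
      _ ≤ r * (r ^ k * u 0 + c / (1 - r)) + c := by gcongr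
      _ = r ^ (k + 1) * u 0 + c / (1 - r) := by field_simp; ring

namespace Matrix.IsHermitian

open scoped MatrixOrder ComplexOrder

variable {𝕜 ι : Type*} [RCLike 𝕜] [Fintype ι] [DecidableEq ι] {A : Matrix ι ι 𝕜}

theorem le_algebraMap_iSup_eigenvalues (hA : A.IsHermitian) :
    A ≤ algebraMap ℝ (Matrix ι ι 𝕜) (⨆ i, hA.eigenvalues i) := by
  refine le_algebraMap_of_spectrum_le (fun x hx => ?_) hA
  obtain ⟨i, rfl⟩ := hA.spectrum_real_eq_range_eigenvalues ▸ hx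
  exact le_ciSup (Set.finite_range _).bddAbove i

theorem dotProduct_mulVec_le_iSup_eigenvalues_mul (hA : A.IsHermitian) (x : ι → 𝕜) :
    star x ⬝ᵥ (A *ᵥ x) ≤ (⨆ i, hA.eigenvalues i : ℝ) * (star x ⬝ᵥ x) := by
  have := (le_iff.mp hA.le_algebraMap_iSup_eigenvalues).dotProduct_mulVec_nonneg x
  rw [sub_mulVec, dotProduct_sub, sub_nonneg, Algebra.algebraMap_eq_smul_one, smul_mulVec,
    one_mulVec, dotProduct_smul] at this
  simpa [RCLike.real_smul_eq_coe_mul] using this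

end Matrix.IsHermitian

section UnitVector

variable {E : Type*} [NormedAddCommGroup E] [InnerProductSpace ℝ E] {u : E}

theorem inner_sub_inner_smul_of_norm_eq_one (hu : ‖u‖ = 1) (x : E) :
    ⟪u, x - ⟪u, x⟫_ℝ • u⟫_ℝ = 0 := by
  rw [inner_sub_right, inner_smul_right, real_inner_self_eq_norm_sq, hu]
  ring

theorem inner_self_sub_inner_smul_of_norm_eq_one (hu : ‖u‖ = 1) (x : E) :
    ⟪x, x - ⟪u, x⟫_ℝ • u⟫_ℝ = ‖x - ⟪u, x⟫_ℝ • u‖ ^ 2 := by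
  rw [← real_inner_self_eq_norm_sq, inner_sub_left _ _ (x - _), real_inner_smul_left,
    real_inner_comm, inner_sub_inner_smul_of_norm_eq_one hu]
  ring

theorem norm_sub_inner_smul_add_smul_sq (hu : ‖u‖ = 1) (x : E) (c : ℝ) :
    ‖x - ⟪u, x⟫_ℝ • u + c • u‖ ^ 2 = ‖x - ⟪u, x⟫_ℝ • u‖ ^ 2 + c ^ 2 := by
  have hperp : ⟪x - ⟪u, x⟫_ℝ • u, c • u⟫_ℝ = 0 := by
    rw [real_inner_smul_right, real_inner_comm, inner_sub_inner_smul_of_norm_eq_one hu, mul_zero]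
  rw [sq, sq, norm_add_sq_eq_norm_sq_add_norm_sq_real hperp, norm_smul, hu, Real.norm_eq_abs,
    mul_one, ← sq, ← sq, sq_abs]

end UnitVector

theorem one_sub_vecMulVec_mulVec {ι : Type*} [Fintype ι] [DecidableEq ι]
    (u z : EuclideanSpace ℝ ι) :
    (1 - vecMulVec u u) *ᵥ z = WithLp.ofLp (z - ⟪u, z⟫_ℝ • u) := by
  rw [sub_mulVec, one_mulVec, vecMulVec_mulVec, op_smul_eq_smul, WithLp.ofLp_sub,
    WithLp.ofLp_smul, EuclideanSpace.inner_eq_star_dotProduct, star_trivial, dotProduct_comm]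

theorem dotProduct_ofLp_eq_inner {ι : Type*} [Fintype ι] (x y : EuclideanSpace ℝ ι) :
    WithLp.ofLp x ⬝ᵥ WithLp.ofLp y = ⟪x, y⟫_ℝ := by
  rw [EuclideanSpace.inner_eq_star_dotProduct, star_trivial, dotProduct_comm]

theorem dotProduct_sum_smul_one_sub_vecMulVec_mulVec {ι κ : Type*} [Fintype ι] [DecidableEq ι]
    [Fintype κ] {a : κ → EuclideanSpace ℝ ι} (ha : ∀ i, ‖a i‖ = 1) (p : κ → ℝ)
    (z : EuclideanSpace ℝ ι) :
    WithLp.ofLp z ⬝ᵥ ((∑ i, p i • (1 - vecMulVec (a i) (a i))) *ᵥ WithLp.ofLp z) =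
      ∑ i, p i * ‖z - ⟪a i, z⟫_ℝ • a i‖ ^ 2 := by
  simp only [sum_mulVec, dotProduct_sum, smul_mulVec, dotProduct_smul, one_sub_vecMulVec_mulVec,
    dotProduct_ofLp_eq_inner, inner_self_sub_inner_smul_of_norm_eq_one (ha _), smul_eq_mul]

theorem posSemidef_sum_smul_one_sub_vecMulVec {ι κ : Type*} [Fintype ι] [DecidableEq ι]
    [Fintype κ] {a : κ → EuclideanSpace ℝ ι} (ha : ∀ i, ‖a i‖ = 1) {p : κ → ℝ}
    (hp : ∀ i, 0 ≤ p i) : (∑ i, p i • (1 - vecMulVec (a i) (a i))).PosSemidef := by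
  refine .of_dotProduct_mulVec_nonneg ?_ fun x => ?_
  · refine isSelfAdjoint_sum _ fun i _ => (isHermitian_one.sub ?_).smul (.all _)
    simpa using (posSemidef_vecMulVec_self_star (WithLp.ofLp (a i))).isHermitian
  · rw [star_trivial, ← WithLp.ofLp_toLp 2 x, dotProduct_sum_smul_one_sub_vecMulVec_mulVec ha]
    exact Finset.sum_nonneg fun i _ => mul_nonneg (hp i) (sq_nonneg _)

section Kaczmarz

variable {n m : ℕ} (a : Fin m → EuclideanSpace ℝ (Fin n)) (η : Fin m → ℝ)

theorem kstep_eq (i : Fin m) (z : EuclideanSpace ℝ (Fin n)) :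
    kstep a η i z = z - ⟪a i, z⟫_ℝ • a i + η i • a i := by
  rw [kstep, one_sub_vecMulVec_mulVec]
  rfl

theorem ktraj_snoc (z0 : EuclideanSpace ℝ (Fin n)) {k : ℕ} (s : Fin k → Fin m) (i : Fin m) :
    ktraj a η z0 (Fin.snoc s i) = kstep a η i (ktraj a η z0 s) := by
  simp only [ktraj, List.ofFn_succ', List.concat_eq_append, List.foldl_concat, Fin.snoc_castSucc,
    Fin.snoc_last]

theorem sum_mul_norm_kstep_sq (ha : ∀ i, ‖a i‖ = 1) (p : Fin m → ℝ)
    (z : EuclideanSpace ℝ (Fin n)) :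
    ∑ i, p i * ‖kstep a η i z‖ ^ 2 =
      ∑ i, p i * ‖z - ⟪a i, z⟫_ℝ • a i‖ ^ 2 + ∑ i, p i * η i ^ 2 := by
  simp only [kstep_eq, norm_sub_inner_smul_add_smul_sq (ha _), mul_add, Finset.sum_add_distrib]

variable (p : Fin m → ℝ) (z0 : EuclideanSpace ℝ (Fin n))

theorem kMSE_zero : kMSE a η p z0 0 = ‖z0‖ ^ 2 := by
  simp [kMSE, ktraj]

theorem kMSE_succ (k : ℕ) :
    kMSE a η p z0 (k + 1) =
      ∑ s : Fin k → Fin m, (∏ j, p (s j)) * ∑ i, p i * ‖kstep a η i (ktraj a η z0 s)‖ ^ 2 := by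
  rw [kMSE, ← (Fin.snocEquiv fun _ => Fin m).sum_comp, Fintype.sum_prod_type, Finset.sum_comm]
  refine Finset.sum_congr rfl fun s _ => ?_
  simp only [Finset.mul_sum, Fin.snocEquiv, Equiv.coe_fn_mk, Fin.prod_univ_castSucc,
    Fin.snoc_castSucc, Fin.snoc_last, ktraj_snoc]
  exact Finset.sum_congr rfl fun i _ => by ring

theorem kMSE_succ_le (hp : ∀ i, 0 ≤ p i) (hsum : ∑ i, p i = 1) {r c : ℝ}
    (hstep : ∀ z, ∑ i, p i * ‖kstep a η i z‖ ^ 2 ≤ r * ‖z‖ ^ 2 + c) (k : ℕ) :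
    kMSE a η p z0 (k + 1) ≤ r * kMSE a η p z0 k + c := by
  have hmass : ∑ s : Fin k → Fin m, ∏ j, p (s j) = 1 := by
    rw [← Fintype.prod_sum (fun _ : Fin k => p), hsum, Finset.prod_const_one]
  calc kMSE a η p z0 (k + 1)
      ≤ ∑ s : Fin k → Fin m, (∏ j, p (s j)) * (r * ‖ktraj a η z0 s‖ ^ 2 + c) := by
        rw [kMSE_succ]
        gcongr with s
        · exact Finset.prod_nonneg fun j _ => hp (s j)
        · exact hstep _
    _ = r * kMSE a η p z0 k + c := by
        simp only [mul_add, Finset.sum_add_distrib, ← Finset.sum_mul, hmass, one_mul, kMSE,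
          Finset.mul_sum]
        exact congrArg (· + c) (Finset.sum_congr rfl fun s _ => by ring)

end Kaczmarz

theorem zouzias_freris_bound_general {n m : ℕ}
    (a : Fin m → EuclideanSpace ℝ (Fin n)) (ha : ∀ i, ‖a i‖ = 1)
    (p : Fin m → ℝ) (hp : ∀ i, 0 < p i) (hsum : ∑ i, p i = 1)
    (η : Fin m → ℝ) (z0 : EuclideanSpace ℝ (Fin n))
    (P : Matrix (Fin n) (Fin n) ℝ)
    (hP : P = ∑ i, p i • ((1 : Matrix (Fin n) (Fin n) ℝ) - vecMulVec (a i) (a i)))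
    (hPh : P.IsHermitian)
    (lam : ℝ) (hlam : lam = ⨆ j, hPh.eigenvalues j) (hlam1 : lam < 1) :
    ∀ k : ℕ, kMSE a η p z0 k ≤
      lam ^ k * ‖z0‖ ^ 2 + (∑ i, p i * η i ^ 2) / (1 - lam) := by
  have hp₀ i : 0 ≤ p i := (hp i).le
  have hlam₀ : 0 ≤ lam := by
    have hPsd : P.PosSemidef := hP ▸ posSemidef_sum_smul_one_sub_vecMulVec ha hp₀
    exact hlam ▸ Real.iSup_nonneg hPsd.eigenvalues_nonneg
  have hstep z : ∑ i, p i * ‖kstep a η i z‖ ^ 2 ≤ lam * ‖z‖ ^ 2 + ∑ i, p i * η i ^ 2 := by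
    have hquad := hP ▸ dotProduct_sum_smul_one_sub_vecMulVec_mulVec ha p z
    have hray := hPh.dotProduct_mulVec_le_iSup_eigenvalues_mul (WithLp.ofLp z)
    rw [star_trivial, hquad, ← hlam, dotProduct_ofLp_eq_inner z z,
      real_inner_self_eq_norm_sq, RCLike.ofReal_real_eq_id, id] at hray
    rw [sum_mul_norm_kstep_sq a η ha]
    exact add_le_add_left hray _
  intro k
  simpa only [kMSE_zero] using le_pow_mul_add_div_of_le_mul_add hlam₀ hlam1
    (Finset.sum_nonneg fun i _ => mul_nonneg (hp₀ i) (sq_nonneg (η i)))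
    (kMSE_succ_le a η p z0 hp₀ hsum hstep) k

theorem zouzias_freris_bound {n m : ℕ}
    (a : Fin m → EuclideanSpace ℝ (Fin n)) (ha : ∀ i, ‖a i‖ = 1)
    (hspan : Submodule.span ℝ (Set.range a) = ⊤)
    (p : Fin m → ℝ) (hp : ∀ i, 0 < p i) (hsum : ∑ i, p i = 1)
    (η : Fin m → ℝ) (z0 : EuclideanSpace ℝ (Fin n))
    (P : Matrix (Fin n) (Fin n) ℝ)
    (hP : P = ∑ i, p i • ((1 : Matrix (Fin n) (Fin n) ℝ) - vecMulVec (a i) (a i)))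
    (hPh : P.IsHermitian)
    (lam : ℝ) (hlam : lam = ⨆ j, hPh.eigenvalues j) (hlam1 : lam < 1) :
    ∀ k : ℕ, kMSE a η p z0 k ≤
      lam ^ k * ‖z0‖ ^ 2 + (∑ i, p i * η i ^ 2) / (1 - lam) :=
  zouzias_freris_bound_general a ha p hp hsum η z0 P hP hPh lam hlam hlam1
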